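/- Let 0 < b ≤ 1 and let r_1, ..., r_N be i.i.d. real random variables with E[r_i] = 0 and E[e^{t r_i}] ≤ e^{b² t² / 2} for all t ∈ ℝ. Let w ∈ ℝ^N satisfy Σ_{i=1}^N w_i² = 1 and set X = Σ_{i=1}^N w_i r_i. Then for every t with 0 ≤ t < 1/2, E[e^{t X²}] ≤ 1/√(1 − 2t). -/

import Mathlib

/-!
For a standard Gaussian `g`, `exp (t x²) = E[exp (√(2t) x g)]`. Substituting `x = X` and
exchanging the two expectations, the sub-Gaussian bound for `X` at the parameter `√(2t) g` gives
`E[exp (t X²)] ≤ E[exp (c t g²)] = 1 / √(1 - 2ct)`. A unit-norm combination of independent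
`1`-sub-Gaussian variables is again `1`-sub-Gaussian, and `b ≤ 1` makes each `r i` one.
-/

open MeasureTheory ProbabilityTheory Real
open scoped ENNReal NNReal

lemma lintegral_ofReal_exp_mul_gaussianReal (a : ℝ) :
    ∫⁻ g, ENNReal.ofReal (exp (a * g)) ∂gaussianReal 0 1 = ENNReal.ofReal (exp (a ^ 2 / 2)) := by
  rw [← ofReal_integral_eq_lintegral_ofReal (integrable_exp_mul_gaussianReal a)
    (ae_of_all _ fun _ ↦ (exp_pos _).le)]
  have := congr_fun (mgf_fun_id_gaussianReal (μ := 0) (v := 1)) a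
  simp_all [mgf]

lemma lintegral_ofReal_exp_mul_sq_gaussianReal {s : ℝ} (hs : s < 1 / 2) :
    ∫⁻ g, ENNReal.ofReal (exp (s * g ^ 2)) ∂gaussianReal 0 1
      = ENNReal.ofReal (1 / √(1 - 2 * s)) := by
  have hdens : ∀ g : ℝ, gaussianPDFReal 0 1 g * exp (s * g ^ 2)
      = (√(2 * π))⁻¹ * exp (-(1 / 2 - s) * g ^ 2) := by
    intro g
    rw [gaussianPDFReal, mul_assoc, ← exp_add]
    congr 2
    · simp
    · simp only [NNReal.coe_one]
      ring
  rw [gaussianReal_of_var_ne_zero 0 one_ne_zero, lintegral_withDensity_eq_lintegral_mul₀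
    (measurable_gaussianPDF 0 1).aemeasurable (by fun_prop)]
  simp_rw [Pi.mul_apply, gaussianPDF, ← ENNReal.ofReal_mul (gaussianPDFReal_nonneg 0 1 _), hdens]
  rw [← ofReal_integral_eq_lintegral_ofReal
    ((integrable_exp_neg_mul_sq (by linarith)).const_mul _)
    (ae_of_all _ fun _ ↦ by positivity), integral_const_mul, integral_gaussian,
    ← sqrt_inv, ← sqrt_mul (by positivity), one_div √(1 - 2 * s), ← sqrt_inv]
  congr 2
  field_simp

namespace ProbabilityTheory.HasSubgaussianMGF

variable {Ω : Type*} [MeasurableSpace Ω] {μ : Measure Ω} {X : Ω → ℝ} {c : ℝ≥0}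

lemma sum_mul_of_iIndepFun {ι : Type*} [Fintype ι] {X : ι → Ω → ℝ} (hindep : iIndepFun X μ)
    (h : ∀ i, HasSubgaussianMGF (X i) c μ) (w : ι → ℝ) :
    HasSubgaussianMGF (fun ω ↦ ∑ i, w i * X i ω) ((∑ i, w i ^ 2).toNNReal * c) μ := by
  have hindep' := hindep.comp (fun i x ↦ w i * x) fun i ↦ measurable_const_mul (w i)
  convert sum_of_iIndepFun (s := .univ) hindep' fun i _ ↦ (h i).const_mul (w i) using 1
  · rfl
  ext
  simp [Finset.sum_mul, Real.coe_toNNReal _ (Finset.sum_nonneg fun i _ ↦ sq_nonneg (w i))]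
  rfl

lemma lintegral_ofReal_exp_mul_le (h : HasSubgaussianMGF X c μ) (s : ℝ) :
    ∫⁻ ω, ENNReal.ofReal (exp (s * X ω)) ∂μ ≤ ENNReal.ofReal (exp (c * s ^ 2 / 2)) := by
  rw [← ofReal_integral_eq_lintegral_ofReal (h.integrable_exp_mul s)
    (ae_of_all _ fun _ ↦ (exp_pos _).le)]
  exact ENNReal.ofReal_le_ofReal (h.mgf_le s)

lemma integral_exp_mul_sq_le [SFinite μ] (h : HasSubgaussianMGF X c μ) {t : ℝ} (ht0 : 0 ≤ t)
    (ht : 2 * c * t < 1) :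
    ∫ ω, exp (t * X ω ^ 2) ∂μ ≤ 1 / √(1 - 2 * c * t) := by
  have hX := h.aemeasurable
  have hct : (c : ℝ) * t < 1 / 2 := by linarith
  rw [integral_eq_lintegral_of_nonneg_ae (ae_of_all _ fun _ ↦ (exp_pos _).le) (by fun_prop)]
  refine ENNReal.toReal_le_of_le_ofReal (by positivity) ?_
  calc ∫⁻ ω, ENNReal.ofReal (exp (t * X ω ^ 2)) ∂μ
      = ∫⁻ ω, ∫⁻ g, ENNReal.ofReal (exp (√(2 * t) * g * X ω)) ∂gaussianReal 0 1 ∂μ := by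
        refine lintegral_congr fun ω ↦ ?_
        simp_rw [mul_comm (√(2 * t) * _), ← mul_assoc]
        rw [lintegral_ofReal_exp_mul_gaussianReal, mul_pow, sq_sqrt (by positivity)]
        ring_nf
    _ = ∫⁻ g, ∫⁻ ω, ENNReal.ofReal (exp (√(2 * t) * g * X ω)) ∂μ ∂gaussianReal 0 1 :=
        lintegral_lintegral_swap (by fun_prop)
    _ ≤ ∫⁻ g, ENNReal.ofReal (exp (c * t * g ^ 2)) ∂gaussianReal 0 1 := by
        refine lintegral_mono fun g ↦ (h.lintegral_ofReal_exp_mul_le _).trans_eq ?_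
        rw [mul_pow, sq_sqrt (by positivity)]
        ring_nf
    _ = ENNReal.ofReal (1 / √(1 - 2 * c * t)) := by
        rw [lintegral_ofReal_exp_mul_sq_gaussianReal hct, mul_assoc]

end ProbabilityTheory.HasSubgaussianMGF

theorem subgaussian_square_mgf_gaussian_comparison_general
    {Ω : Type*} [MeasurableSpace Ω] (μ : Measure Ω) [IsProbabilityMeasure μ]
    (b : ℝ) (hb0 : 0 < b) (hb1 : b ≤ 1) (N : ℕ) (r : Fin N → Ω → ℝ)
    (hindep : iIndepFun r μ)
    (hint : ∀ i (t : ℝ), Integrable (fun ω => Real.exp (t * r i ω)) μ)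
    (hsub : ∀ i (t : ℝ), ∫ ω, Real.exp (t * r i ω) ∂μ ≤ Real.exp (b ^ 2 * t ^ 2 / 2))
    (w : Fin N → ℝ) (hw : ∑ i, (w i) ^ 2 = 1)
    (t : ℝ) (ht0 : 0 ≤ t) (ht1 : t < 1 / 2) :
    ∫ ω, Real.exp (t * (∑ i, w i * r i ω) ^ 2) ∂μ ≤ 1 / Real.sqrt (1 - 2 * t) := by
  have hb : b ^ 2 ≤ 1 := pow_le_one₀ hb0.le hb1
  have hr : ∀ i, HasSubgaussianMGF (r i) 1 μ := fun i ↦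
    ⟨hint i, fun s ↦ (hsub i s).trans (exp_le_exp.2 (by rw [NNReal.coe_one]; gcongr))⟩
  have hX := HasSubgaussianMGF.sum_mul_of_iIndepFun hindep hr w
  rw [hw, Real.toNNReal_one, one_mul] at hX
  simpa using hX.integral_exp_mul_sq_le ht0 (by simpa using (by linarith : 2 * t < 1))

/-- **Gaussian-comparison MGF bound for `b ≤ 1` (Section 3.1).**
Let `0 < b ≤ 1` and let `r 1, ..., r N` be i.i.d. real random variables with mean `0` and
`E[exp (t * r i)] ≤ exp (b² t² / 2)` for all `t` (`b`-subgaussian).  Let `w ∈ ℝ^N` with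
`∑ i, (w i)² = 1` and set `X = ∑ i, w i * r i`.  Then for every `t` with `0 ≤ t < 1/2`,
`E[exp (t X²)] ≤ 1/√(1 - 2t)`. -/
theorem subgaussian_square_mgf_gaussian_comparison
    {Ω : Type*} [MeasurableSpace Ω] (μ : Measure Ω) [IsProbabilityMeasure μ]
    (b : ℝ) (hb0 : 0 < b) (hb1 : b ≤ 1) (N : ℕ) (r : Fin N → Ω → ℝ)
    (hmeas : ∀ i, Measurable (r i))
    (hindep : iIndepFun r μ)
    (hident : ∀ i j, IdentDistrib (r i) (r j) μ μ)
    (hmean : ∀ i, ∫ ω, r i ω ∂μ = 0)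
    (hint : ∀ i (t : ℝ), Integrable (fun ω => Real.exp (t * r i ω)) μ)
    (hsub : ∀ i (t : ℝ), ∫ ω, Real.exp (t * r i ω) ∂μ ≤ Real.exp (b ^ 2 * t ^ 2 / 2))
    (w : Fin N → ℝ) (hw : ∑ i, (w i) ^ 2 = 1)
    (t : ℝ) (ht0 : 0 ≤ t) (ht1 : t < 1 / 2) :
    ∫ ω, Real.exp (t * (∑ i, w i * r i ω) ^ 2) ∂μ ≤ 1 / Real.sqrt (1 - 2 * t) :=
  subgaussian_square_mgf_gaussian_comparison_general μ b hb0 hb1 N r hindep hint hsub w hw t ht0 ht1
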